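/- Let c > 0, β ∈ (1/2, 1], and η(τ) := (β-1)/(1 + (2β-1)τ). Then η(τ) ≤ 0 for all τ ≥ 0, η(τ) → 0 as τ → ∞, and ∫₀^τ |η(τ - s)|/√s ds ≤ ((1-β)/(2β-1))·(2√2 + √2·log(1 + (2β-1)τ/2))/√τ for every τ > 0. -/

import Mathlib

/-!
Write `a = 2β - 1`, so that `|η (τ - s)| = (1 - β) / (1 + a (τ - s))` for `s ∈ [0, τ]`, and split the
integral at `τ / 2`. On `[0, τ/2]` the denominator is at least `aτ/2`, and `∫ s^(-1/2) = 2 √(τ/2)`.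
On `[τ/2, τ]` we have `√s ≥ √(τ/2)`, and what remains integrates to `log (1 + aτ/2) / a`.
-/

open Real intervalIntegral Filter MeasureTheory Set

lemma inv_sqrt_eqOn_rpow : EqOn (fun s : ℝ => (√s)⁻¹) (fun s => s ^ (-(1 / 2) : ℝ)) (Ici 0) :=
  fun s hs => by simp only [sqrt_eq_rpow, rpow_neg (mem_Ici.1 hs)]

lemma intervalIntegrable_inv_sqrt {x : ℝ} (hx : 0 ≤ x) :
    IntervalIntegrable (fun s => (√s)⁻¹) volume 0 x :=
  (intervalIntegrable_rpow' (by norm_num)).congr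
    (inv_sqrt_eqOn_rpow.mono (uIoc_of_le hx ▸ Ioc_subset_Icc_self.trans Icc_subset_Ici_self)).symm

lemma integral_inv_sqrt {x : ℝ} (hx : 0 ≤ x) : ∫ s in (0 : ℝ)..x, (√s)⁻¹ = 2 * √x := by
  rw [integral_congr (inv_sqrt_eqOn_rpow.mono (uIcc_of_le hx ▸ Icc_subset_Ici_self)),
    integral_rpow (Or.inl (by norm_num)), sqrt_eq_rpow]
  norm_num
  ring

lemma integral_inv_one_add_mul {a b : ℝ} (ha : a ≠ 0) (hab : 0 < 1 + a * b) :
    ∫ t in (0 : ℝ)..b, (1 + a * t)⁻¹ = log (1 + a * b) / a := by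
  have h := integral_comp_mul_add (fun x : ℝ => x⁻¹) ha 1 (a := 0) (b := b)
  simp only [mul_zero, zero_add] at h
  rw [show (fun t => (1 + a * t)⁻¹) = fun t => (a * t + 1)⁻¹ by simp only [add_comm],
    h, integral_inv_of_pos one_pos (by linarith), smul_eq_mul, div_one, add_comm, inv_mul_eq_div]

section Kernel

variable {a τ : ℝ}

lemma one_add_mul_sub_pos (ha : 0 ≤ a) {s : ℝ} (hs : s ≤ τ) : 0 < 1 + a * (τ - s) := by
  nlinarith [mul_nonneg ha (sub_nonneg.2 hs)]

lemma intervalIntegrable_kernel (ha : 0 ≤ a) (hτ : 0 ≤ τ) :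
    IntervalIntegrable (fun s => (1 + a * (τ - s))⁻¹ / √s) volume 0 τ := by
  refine (intervalIntegrable_inv_sqrt hτ).mono_fun
    (by fun_prop : Measurable _).aestronglyMeasurable ?_
  filter_upwards [ae_restrict_mem measurableSet_uIoc] with s hs
  rw [uIoc_of_le hτ] at hs
  have hD := one_add_mul_sub_pos ha hs.2
  rw [norm_div, norm_inv, norm_inv, norm_of_nonneg hD.le, div_eq_mul_inv]
  exact mul_le_of_le_one_left (by positivity)
    (inv_le_one_of_one_le₀ (by nlinarith [mul_nonneg ha (sub_nonneg.2 hs.2)]))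

lemma integral_kernel_left_le (ha : 0 < a) (hτ : 0 < τ) :
    ∫ s in (0 : ℝ)..τ / 2, (1 + a * (τ - s))⁻¹ / √s ≤ 4 * √(τ / 2) / (a * τ) := calc
  _ ≤ ∫ s in (0 : ℝ)..τ / 2, (a * τ / 2)⁻¹ * (√s)⁻¹ := by
    refine integral_mono_on (by positivity) ((intervalIntegrable_kernel ha.le hτ.le).mono_set ?_)
      ((intervalIntegrable_inv_sqrt (by positivity)).const_mul _) fun s hs => ?_
    · rw [uIcc_of_le (by positivity), uIcc_of_le hτ.le]
      exact Icc_subset_Icc_right (by linarith)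
    rw [div_eq_mul_inv]
    gcongr
    nlinarith [mul_nonneg ha.le (sub_nonneg.2 hs.2)]
  _ = 4 * √(τ / 2) / (a * τ) := by
    rw [intervalIntegral.integral_const_mul, integral_inv_sqrt (by positivity)]
    field_simp
    ring

lemma integral_kernel_right_le (ha : 0 < a) (hτ : 0 < τ) :
    ∫ s in τ / 2..τ, (1 + a * (τ - s))⁻¹ / √s ≤ log (1 + a * τ / 2) / (a * √(τ / 2)) := calc
  _ ≤ ∫ s in τ / 2..τ, (√(τ / 2))⁻¹ * (1 + a * (τ - s))⁻¹ := by
    refine integral_mono_on (by linarith) ((intervalIntegrable_kernel ha.le hτ.le).mono_set ?_)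
      (ContinuousOn.intervalIntegrable ?_) fun s hs => ?_
    · rw [uIcc_of_le (by linarith), uIcc_of_le hτ.le]
      exact Icc_subset_Icc_left (by linarith)
    · exact continuousOn_const.mul <| ContinuousOn.inv₀ (by fun_prop) fun s hs =>
        (one_add_mul_sub_pos ha.le (uIcc_of_le (by linarith : τ / 2 ≤ τ) ▸ hs).2).ne'
    have hD := one_add_mul_sub_pos ha.le hs.2
    rw [div_eq_mul_inv, mul_comm]
    gcongr
    exact hs.1
  _ = (√(τ / 2))⁻¹ * ∫ t in (0 : ℝ)..τ / 2, (1 + a * t)⁻¹ := by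
    rw [intervalIntegral.integral_const_mul, integral_comp_sub_left (fun t => (1 + a * t)⁻¹),
      sub_self, sub_half]
  _ = log (1 + a * τ / 2) / (a * √(τ / 2)) := by
    rw [integral_inv_one_add_mul ha.ne' (by positivity), mul_div_assoc]
    field_simp

lemma integral_kernel_le (ha : 0 < a) (hτ : 0 < τ) :
    ∫ s in (0 : ℝ)..τ, (1 + a * (τ - s))⁻¹ / √s
      ≤ (2 * √2 + √2 * log (1 + a * τ / 2)) / a / √τ := by
  have hint := intervalIntegrable_kernel ha.le hτ.le
  have hmid : τ / 2 ∈ uIcc 0 τ := by rw [uIcc_of_le hτ.le]; constructor <;> linarith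
  rw [← integral_add_adjacent_intervals (hint.mono_set (uIcc_subset_uIcc_left hmid))
    (hint.mono_set (uIcc_subset_uIcc_right hmid))]
  refine (add_le_add (integral_kernel_left_le ha hτ) (integral_kernel_right_le ha hτ)).trans_eq ?_
  rw [sqrt_div hτ.le]
  field_simp
  rw [sq_sqrt zero_le_two, sq_sqrt hτ.le]
  ring

end Kernel

theorem eta_properties_general (β : ℝ) (hβ : β ∈ Set.Ioc (1 / 2 : ℝ) 1)
    (η : ℝ → ℝ) (hη : ∀ τ, η τ = (β - 1) / (1 + (2 * β - 1) * τ)) :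
    (∀ τ ≥ (0 : ℝ), η τ ≤ 0) ∧
    Tendsto η atTop (nhds 0) ∧
    (∀ τ > (0 : ℝ),
      (∫ s in (0 : ℝ)..τ, |η (τ - s)| / Real.sqrt s)
        ≤ ((1 - β) / (2 * β - 1)) *
            (2 * Real.sqrt 2 + Real.sqrt 2 * Real.log (1 + (2 * β - 1) * τ / 2))
            / Real.sqrt τ) := by
  obtain ⟨hβ₁, hβ₂⟩ := hβ
  have ha : 0 < 2 * β - 1 := by linarith
  refine ⟨fun τ hτ => ?_, ?_, fun τ hτ => ?_⟩
  · rw [hη]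
    exact div_nonpos_of_nonpos_of_nonneg (by linarith) (by nlinarith)
  · rw [funext hη]
    exact (tendsto_atTop_add_const_left _ 1 (tendsto_id.const_mul_atTop ha)).const_div_atTop _
  calc ∫ s in (0 : ℝ)..τ, |η (τ - s)| / √s
      = (1 - β) * ∫ s in (0 : ℝ)..τ, (1 + (2 * β - 1) * (τ - s))⁻¹ / √s := by
        rw [← intervalIntegral.integral_const_mul]
        refine integral_congr fun s hs => ?_
        rw [uIcc_of_le hτ.le] at hs
        rw [hη, abs_div, abs_of_nonpos (by linarith), abs_of_pos (one_add_mul_sub_pos ha.le hs.2),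
          neg_sub]
        ring
    _ ≤ (1 - β) * ((2 * √2 + √2 * log (1 + (2 * β - 1) * τ / 2)) / (2 * β - 1) / √τ) :=
        mul_le_mul_of_nonneg_left (integral_kernel_le ha hτ) (by linarith)
    _ = _ := by ring

/-- Properties of the coefficient `η(τ) = (β-1)/(1+(2β-1)τ)` for `β ∈ (1/2,1]`:
nonpositivity, vanishing at infinity, and a convolution estimate. -/
theorem eta_properties (c β : ℝ) (hc : 0 < c) (hβ : β ∈ Set.Ioc (1 / 2 : ℝ) 1)
    (η : ℝ → ℝ) (hη : ∀ τ, η τ = (β - 1) / (1 + (2 * β - 1) * τ)) :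
    (∀ τ ≥ (0 : ℝ), η τ ≤ 0) ∧
    Tendsto η atTop (nhds 0) ∧
    (∀ τ > (0 : ℝ),
      (∫ s in (0 : ℝ)..τ, |η (τ - s)| / Real.sqrt s)
        ≤ ((1 - β) / (2 * β - 1)) *
            (2 * Real.sqrt 2 + Real.sqrt 2 * Real.log (1 + (2 * β - 1) * τ / 2))
            / Real.sqrt τ) :=
  eta_properties_general β hβ η hη
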